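/- arXiv:2312.03311 — 5 statements merged into one kernel-verified Lean document; each statement's English description precedes it below -/
import Mathlib

section
/- Let A and B be self-adjoint invertible bounded linear operators on a Hilbert space H, and let c ≥ 1. If ‖A f‖/‖B f‖ ∈ [c⁻¹, c] for all nonzero f ∈ H, then ‖A⁻¹ f‖/‖B⁻¹ f‖ ∈ [c⁻¹, c] for all nonzero f ∈ H. -/
/-!
If `‖A f‖ ≤ c ‖B f‖` for all `f`, then `‖A B⁻¹‖ ≤ c`. Taking adjoints, `‖B⁻¹ A‖ ≤ c` as well,
since `A` and `B⁻¹` are self-adjoint, and evaluating `B⁻¹ A` at `A⁻¹ f` gives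
`‖B⁻¹ f‖ ≤ c ‖A⁻¹ f‖`. Both two-sided bounds on `A, B` thus transfer to `A⁻¹, B⁻¹`.
-/

open ContinuousLinearMap

theorem IsSelfAdjoint.of_mul_eq_one {R : Type*} [Monoid R] [StarMul R] {a b : R}
    (ha : IsSelfAdjoint a) (hab : a * b = 1) : IsSelfAdjoint b := by
  have hleft : star b * a = 1 := by rw [← ha.star_eq, ← star_mul, hab, star_one]
  exact left_inv_eq_right_inv hleft hab

theorem inv_le_div_and_div_le_iff {a b c : ℝ} (hc : 0 < c) (hb : 0 < b) :
    (c⁻¹ ≤ a / b ∧ a / b ≤ c) ↔ (b ≤ c * a ∧ a ≤ c * b) := by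
  rw [le_div_iff₀ hb, inv_mul_le_iff₀ hc, div_le_iff₀ hb]

namespace ContinuousLinearMap

variable {𝕜 E F G : Type*} [NontriviallyNormedField 𝕜]
  [NormedAddCommGroup E] [NormedSpace 𝕜 E] [NormedAddCommGroup F] [NormedSpace 𝕜 F]
  [NormedAddCommGroup G] [NormedSpace 𝕜 G]

theorem opNorm_comp_rightInverse_le {S : E →L[𝕜] F} {S' : F →L[𝕜] E} {T : E →L[𝕜] G} {c : ℝ}
    (hSS' : S ∘L S' = 1) (hc : 0 ≤ c) (hTS : ∀ x, ‖T x‖ ≤ c * ‖S x‖) : ‖T ∘L S'‖ ≤ c := by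
  refine opNorm_le_bound _ hc fun y => ?_
  have hy : S (S' y) = y := by simpa using DFunLike.congr_fun hSS' y
  simpa [hy] using hTS (S' y)

end ContinuousLinearMap

section SelfAdjoint

variable {𝕜 H : Type*} [RCLike 𝕜] [NormedAddCommGroup H] [InnerProductSpace 𝕜 H] [CompleteSpace H]

theorem norm_rightInverse_le_of_norm_le {S T S' T' : H →L[𝕜] H}
    (hS : IsSelfAdjoint S) (hT : IsSelfAdjoint T) (hSS' : S ∘L S' = 1) (hTT' : T ∘L T' = 1)
    {c : ℝ} (hc : 0 ≤ c) (hTS : ∀ f, ‖T f‖ ≤ c * ‖S f‖) (f : H) :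
    ‖S' f‖ ≤ c * ‖T' f‖ := by
  have hS' : IsSelfAdjoint S' := hS.of_mul_eq_one hSS'
  have hnorm : ‖S' * T‖ ≤ c := by
    rw [← hS'.star_eq, ← hT.star_eq, ← star_mul, star_eq_adjoint, adjoint.norm_map]
    exact opNorm_comp_rightInverse_le hSS' hc hTS
  have hf : T (T' f) = f := by simpa using DFunLike.congr_fun hTT' f
  calc ‖S' f‖ = ‖(S' * T) (T' f)‖ := by rw [mul_apply_eq_comp, hf]
    _ ≤ ‖S' * T‖ * ‖T' f‖ := le_opNorm _ _
    _ ≤ c * ‖T' f‖ := mul_le_mul_of_nonneg_right hnorm (norm_nonneg _)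

end SelfAdjoint

theorem stmt1_general {H : Type*} [NormedAddCommGroup H] [InnerProductSpace ℝ H] [CompleteSpace H]
    (A B A' B' : H →L[ℝ] H)
    (hA : IsSelfAdjoint A) (hB : IsSelfAdjoint B)
    (hAA' : A ∘L A' = 1)
    (hBB' : B ∘L B' = 1)
    (c : ℝ) (hc : 1 ≤ c)
    (h : ∀ f : H, f ≠ 0 → c⁻¹ ≤ ‖A f‖ / ‖B f‖ ∧ ‖A f‖ / ‖B f‖ ≤ c) :
    ∀ f : H, f ≠ 0 → c⁻¹ ≤ ‖A' f‖ / ‖B' f‖ ∧ ‖A' f‖ / ‖B' f‖ ≤ c := by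
  have hc0 : 0 < c := one_pos.trans_le hc
  -- `‖B f‖ = 0` would make the quotient `0` by the junk value of division.
  have hBpos : ∀ f : H, f ≠ 0 → 0 < ‖B f‖ := fun f hf => by
    by_contra hBf
    have hquot := (h f hf).1
    rw [le_antisymm (not_lt.mp hBf) (norm_nonneg _), div_zero] at hquot
    exact (inv_pos.mpr hc0).not_ge hquot
  have hAB : ∀ f : H, ‖B f‖ ≤ c * ‖A f‖ ∧ ‖A f‖ ≤ c * ‖B f‖ := fun f => by
    by_cases hf : f = 0
    · simp [hf]
    · exact (inv_le_div_and_div_le_iff hc0 (hBpos f hf)).mp (h f hf)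
  intro f hf
  have hB'f : B' f ≠ 0 := fun h0 => hf (by simpa [h0] using (DFunLike.congr_fun hBB' f).symm)
  rw [inv_le_div_and_div_le_iff hc0 (norm_pos_iff.mpr hB'f)]
  exact ⟨norm_rightInverse_le_of_norm_le hB hA hBB' hAA' hc0.le (fun g => (hAB g).2) f,
    norm_rightInverse_le_of_norm_le hA hB hAA' hBB' hc0.le (fun g => (hAB g).1) f⟩

/-- For self-adjoint invertible bounded operators `A`, `B` on a Hilbert space
and `c ≥ 1`, if `‖A f‖/‖B f‖ ∈ [c⁻¹, c]` for all nonzero `f`, then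
`‖A⁻¹ f‖/‖B⁻¹ f‖ ∈ [c⁻¹, c]` for all nonzero `f`. -/
theorem stmt1 {H : Type*} [NormedAddCommGroup H] [InnerProductSpace ℝ H] [CompleteSpace H]
    (A B A' B' : H →L[ℝ] H)
    (hA : IsSelfAdjoint A) (hB : IsSelfAdjoint B)
    (hAA' : A ∘L A' = 1) (hA'A : A' ∘L A = 1)
    (hBB' : B ∘L B' = 1) (hB'B : B' ∘L B = 1)
    (c : ℝ) (hc : 1 ≤ c)
    (h : ∀ f : H, f ≠ 0 → c⁻¹ ≤ ‖A f‖ / ‖B f‖ ∧ ‖A f‖ / ‖B f‖ ≤ c) :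
    ∀ f : H, f ≠ 0 → c⁻¹ ≤ ‖A' f‖ / ‖B' f‖ ∧ ‖A' f‖ / ‖B' f‖ ≤ c :=
  stmt1_general A B A' B' hA hB hAA' hBB' c hc h
end

section
/- For any positive semidefinite Hermitian matrices A and B of the same size, ‖A^{1/2} − B^{1/2}‖_op ≤ √(‖A − B‖_op), where A^{1/2} denotes the unique positive semidefinite square root. -/
open scoped ComplexOrder

/-- The spectral (ℓ²-operator) norm of a square complex matrix. -/
noncomputable def opNorm {n : Type*} [Fintype n] [DecidableEq n] (M : Matrix n n ℂ) : ℝ :=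
  ‖(Matrix.toEuclideanCLM (𝕜 := ℂ) M : EuclideanSpace ℂ n →L[ℂ] EuclideanSpace ℂ n)‖

/-- The square root of a positive semidefinite matrix (as `Matrix.PosSemidef.sqrt` was defined
in the older Mathlib, where it has since been removed). -/
noncomputable def Matrix.PosSemidef.sqrt {n : Type*} [Fintype n] [DecidableEq n] {A : Matrix n n ℂ}
    (hA : A.PosSemidef) : Matrix n n ℂ :=
  (hA.1.eigenvectorUnitary : Matrix n n ℂ) *
    Matrix.diagonal (fun i => ((Real.sqrt (hA.1.eigenvalues i) : ℝ) : ℂ)) *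
    (star hA.1.eigenvectorUnitary : Matrix n n ℂ)

/-!
Let `S, T ≥ 0` and `C = S - T`. Being self-adjoint, `C` has norm equal to its spectral radius,
so it suffices to bound each eigenvalue `μ`. For a unit eigenvector `x`, the numbers
`a = ⟪S x, x⟫` and `b = ⟪T x, x⟫` are nonnegative reals with `μ = a - b`, and the identity
`S² - T² = S C + C T` gives `⟪(S² - T²) x, x⟫ = μ (a + b)`. Hence
`μ² = |μ| |a - b| ≤ |μ| (a + b) ≤ ‖S² - T²‖`. Apply this to `S = √A`, `T = √B`.
-/

open scoped InnerProductSpace ComplexConjugate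
open RCLike

namespace ContinuousLinearMap

variable {𝕜 E : Type*} [RCLike 𝕜] [NormedAddCommGroup E] [InnerProductSpace 𝕜 E]

theorem norm_le_of_forall_hasEigenvalue [FiniteDimensional 𝕜 E] {C : E →L[𝕜] E}
    (hC : C.IsSymmetric) {c : ℝ} (hc : 0 ≤ c)
    (h : ∀ μ, Module.End.HasEigenvalue (C : Module.End 𝕜 E) μ → ‖μ‖ ≤ c) : ‖C‖ ≤ c := by
  have := FiniteDimensional.complete 𝕜 E
  have hρ : spectralRadius 𝕜 C ≤ ENNReal.ofReal c := by
    refine iSup₂_le fun μ hμ ↦ ?_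
    rw [spectrum_eq, ← Module.End.hasEigenvalue_iff_mem_spectrum] at hμ
    rw [← enorm_eq_nnnorm, ← ofReal_norm]
    exact ENNReal.ofReal_le_ofReal (h μ hμ)
  rwa [C.spectralRadius_eq_nnnorm hC.isSelfAdjoint, ← enorm_eq_nnnorm, ← ofReal_norm,
    ENNReal.ofReal_le_ofReal_iff hc] at hρ

theorem norm_inner_apply_self_le (D : E →L[𝕜] E) {x : E} (hx : ‖x‖ = 1) :
    ‖⟪D x, x⟫_𝕜‖ ≤ ‖D‖ :=
  (norm_inner_le_norm _ _).trans (by simpa [hx] using D.le_opNorm x)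

theorem IsPositive.norm_sq_le_of_apply_eq_smul {S T : E →L[𝕜] E} (hS : S.IsPositive)
    (hT : T.IsPositive) {x : E} (hx : ‖x‖ = 1) {μ : 𝕜} (hμ : (S - T) x = μ • x) :
    ‖μ‖ ^ 2 ≤ ‖S * S - T * T‖ := by
  set a := re ⟪S x, x⟫_𝕜
  set b := re ⟪T x, x⟫_𝕜
  have ha : (a : 𝕜) = ⟪S x, x⟫_𝕜 := hS.isSymmetric.coe_re_inner_apply_self x
  have hb : (b : 𝕜) = ⟪T x, x⟫_𝕜 := hT.isSymmetric.coe_re_inner_apply_self x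
  have ha_nonneg : 0 ≤ a := hS.re_inner_nonneg_left x
  have hb_nonneg : 0 ≤ b := hT.re_inner_nonneg_left x
  have hμ_eq : μ = ((a - b : ℝ) : 𝕜) := by
    have : ⟪(S - T) x, x⟫_𝕜 = conj μ := by
      rw [hμ, inner_smul_left, inner_self_eq_norm_sq_to_K, hx]
      simp
    rw [← conj_conj μ, ← this, sub_apply, inner_sub_left, ← ha, ← hb]
    simp
  have hD : ⟪(S * S - T * T) x, x⟫_𝕜 = (((a - b) * (a + b) : ℝ) : 𝕜) := by
    have hD_eq : S * S - T * T = S * (S - T) + (S - T) * T := by noncomm_ring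
    have hC_symm : ⟪(S - T) (T x), x⟫_𝕜 = ⟪T x, (S - T) x⟫_𝕜 :=
      hS.isSymmetric.sub hT.isSymmetric (T x) x
    rw [hD_eq, add_apply, inner_add_left, mul_apply_eq_comp, mul_apply_eq_comp,
      hS.inner_left_eq_inner_right, hμ, hC_symm, hμ, inner_smul_left, inner_smul_right,
      ← hS.inner_left_eq_inner_right, ← ha, ← hb, hμ_eq, conj_ofReal]
    push_cast
    ring
  calc ‖μ‖ ^ 2 = |a - b| * |a - b| := by rw [hμ_eq, norm_ofReal, sq]
    _ ≤ |a - b| * (a + b) := by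
        gcongr
        exact abs_sub_le_iff.2 ⟨by linarith, by linarith⟩
    _ = ‖⟪(S * S - T * T) x, x⟫_𝕜‖ := by
        rw [hD, norm_ofReal, abs_mul, abs_of_nonneg (add_nonneg ha_nonneg hb_nonneg)]
    _ ≤ ‖S * S - T * T‖ := norm_inner_apply_self_le _ hx

theorem IsPositive.norm_sub_le_sqrt_norm_mul_self_sub_mul_self [FiniteDimensional 𝕜 E]
    {S T : E →L[𝕜] E} (hS : S.IsPositive) (hT : T.IsPositive) :
    ‖S - T‖ ≤ √‖S * S - T * T‖ := by
  refine norm_le_of_forall_hasEigenvalue (hS.isSymmetric.sub hT.isSymmetric)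
    (Real.sqrt_nonneg _) fun μ hμ ↦ Real.le_sqrt_of_sq_le ?_
  obtain ⟨v, hv⟩ := hμ.exists_hasEigenvector
  refine hS.norm_sq_le_of_apply_eq_smul hT (norm_smul_inv_norm (𝕜 := 𝕜) hv.2) ?_
  rw [map_smul, ← coe_coe, hv.apply_eq_smul, smul_comm]

end ContinuousLinearMap

namespace Matrix.PosSemidef

variable {n : Type*} [Fintype n] [DecidableEq n] {A : Matrix n n ℂ}

theorem posSemidef_sqrt (hA : A.PosSemidef) : hA.sqrt.PosSemidef := by
  rw [PosSemidef.sqrt, star_eq_conjTranspose]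
  refine mul_mul_conjTranspose_same (posSemidef_diagonal_iff.mpr fun i ↦ ?_) _
  exact_mod_cast Real.sqrt_nonneg _

theorem sqrt_mul_self (hA : A.PosSemidef) : hA.sqrt * hA.sqrt = A := by
  set U : Matrix n n ℂ := ↑hA.1.eigenvectorUnitary
  have hU : star U * U = 1 := Unitary.coe_star_mul_self _
  conv_rhs => rw [hA.1.spectral_theorem, Unitary.conjStarAlgAut_apply]
  simp only [PosSemidef.sqrt, Matrix.mul_assoc]
  rw [← Matrix.mul_assoc (star U), hU, Matrix.one_mul, ← Matrix.mul_assoc (diagonal _),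
    diagonal_mul_diagonal]
  congr 3
  funext i
  simp only [Function.comp_apply, ← Complex.ofReal_mul,
    Real.mul_self_sqrt (hA.eigenvalues_nonneg i)]
  rfl

theorem isPositive_toEuclideanCLM (hA : A.PosSemidef) :
    (toEuclideanCLM (𝕜 := ℂ) A).IsPositive :=
  isPositive_toEuclideanLin_iff.mpr hA

end Matrix.PosSemidef

/-- For positive semidefinite Hermitian matrices `A`, `B`,
`‖A^{1/2} − B^{1/2}‖_op ≤ √‖A − B‖_op`. -/
theorem stmt3 {n : Type*} [Fintype n] [DecidableEq n] {A B : Matrix n n ℂ}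
    (hA : A.PosSemidef) (hB : B.PosSemidef) :
    opNorm (hA.sqrt - hB.sqrt) ≤ Real.sqrt (opNorm (A - B)) := by
  have key := ContinuousLinearMap.IsPositive.norm_sub_le_sqrt_norm_mul_self_sub_mul_self
    hA.posSemidef_sqrt.isPositive_toEuclideanCLM hB.posSemidef_sqrt.isPositive_toEuclideanCLM
  rwa [← map_sub, ← map_mul, ← map_mul, ← map_sub, hA.sqrt_mul_self, hB.sqrt_mul_self] at key
end

section
/- Let K be a positive semidefinite Hermitian matrix and let P, P' be positive definite Hermitian matrices of the same size. Suppose γ > 0 is such that for all vectors f, (1+γ)⁻¹ ‖P^{1/2} f‖ ≤ ‖P'^{1/2} f‖ ≤ (1+γ) ‖P^{1/2} f‖, and suppose P commutes with K. Then κ(P'^{1/2} K P'^{1/2}) ≤ (1+γ)⁴ κ(P K), where κ is the ratio of largest to smallest nonzero singular value. -/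
open scoped ComplexOrder
open scoped MatrixOrder

/-- The set of (nonzero) singular values of `M`:
positive reals `s` with `s²` an eigenvalue of `Mᴴ M`. -/
noncomputable def singVals {n : Type*} [Fintype n] [DecidableEq n]
    (M : Matrix n n ℂ) : Set ℝ :=
  {s : ℝ | 0 < s ∧ ((s : ℂ) ^ 2) ∈ spectrum ℂ (M.conjTranspose * M)}

/-- Condition number: largest singular value divided by smallest nonzero singular value. -/
noncomputable def kappa {n : Type*} [Fintype n] [DecidableEq n]
    (M : Matrix n n ℂ) : ℝ :=
  sSup (singVals M) / sInf (singVals M)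


/-!
Write `K = C²` with `C = K^{1/2}`. Since `σ(XY) \ {0} = σ(YX) \ {0}`, the nonzero singular values
of the Hermitian matrices `PK = (PC)C` and `P'^{1/2} K P'^{1/2} = (P'^{1/2} C)(C P'^{1/2})` are the
positive eigenvalues of `M = CPC` and `M' = CP'C`. Applied to `f = Cx`, the hypothesis says that
`M` and `M'` are comparable as quadratic forms up to the factor `c = (1+γ)²`, so they have the same
kernel. Expanding in an eigenbasis, `λ_max(M') ≤ c λ_max(M)`, and evaluating on an eigenvector of
`M'` (which is orthogonal to `ker M' = ker M`) gives `λ_min⁺(M) ≤ c λ_min⁺(M')`.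
-/

lemma sSup_div_sInf_le_sq_mul {S T : Set ℝ} (hS : S.Finite) (hS_pos : ∀ s ∈ S, 0 < s) {c : ℝ}
    (hc : 0 < c) (hT_le : ∀ t ∈ T, t ≤ c * sSup S) (hT_ge : ∀ t ∈ T, sInf S ≤ c * t) :
    sSup T / sInf T ≤ c ^ 2 * (sSup S / sInf S) := by
  have hsup : 0 ≤ sSup S := Real.sSup_nonneg fun s hs => (hS_pos s hs).le
  have hinf : 0 ≤ sInf S := Real.sInf_nonneg fun s hs => (hS_pos s hs).le
  rcases T.eq_empty_or_nonempty with rfl | hT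
  · simp only [Real.sSup_empty, Real.sInf_empty, div_zero]
    positivity
  rcases S.eq_empty_or_nonempty with rfl | hS_ne
  · simp only [Real.sSup_empty, mul_zero] at hT_le
    simp only [Real.sInf_empty, div_zero, mul_zero] at hT_ge ⊢
    exact div_nonpos_of_nonpos_of_nonneg (Real.sSup_le hT_le le_rfl)
      (le_csInf hT fun t ht => nonneg_of_mul_nonneg_right (hT_ge t ht) hc)
  have hinf_pos : 0 < sInf S := hS_pos _ (hS_ne.csInf_mem hS)
  calc sSup T / sInf T ≤ (c * sSup S) / (c⁻¹ * sInf S) :=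
        div_le_div₀ (by positivity) (Real.sSup_le hT_le (by positivity)) (by positivity)
          (le_csInf hT fun t ht => (inv_mul_le_iff₀ hc).mpr (hT_ge t ht))
    _ = c ^ 2 * (sSup S / sInf S) := by field_simp

namespace Matrix

variable {n : Type*} [Fintype n]

lemma star_mulVec_dotProduct_mulVec_mulVec {α : Type*} [CommSemiring α] [StarRing α]
    (B R : Matrix n n α) (x : n → α) :
    star (B *ᵥ x) ⬝ᵥ R *ᵥ (B *ᵥ x) = star x ⬝ᵥ (Bᴴ * R * B) *ᵥ x := by
  rw [star_mulVec, dotProduct_mulVec, vecMul_vecMul, ← dotProduct_mulVec, mulVec_mulVec]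

lemma re_star_dotProduct_diagonal_mulVec [DecidableEq n] (d : n → ℝ) (u : n → ℂ) :
    (star u ⬝ᵥ diagonal (fun i => (d i : ℂ)) *ᵥ u).re = ∑ i, d i * Complex.normSq (u i) := by
  simp only [dotProduct, mulVec_diagonal, Pi.star_apply, Complex.re_sum]
  refine Finset.sum_congr rfl fun i _ => ?_
  rw [mul_left_comm, Complex.star_def, ← Complex.normSq_eq_conj_mul_self, ← Complex.ofReal_mul,
    Complex.ofReal_re]

lemma re_star_dotProduct_self_pos {x : n → ℂ} (hx : x ≠ 0) : 0 < (star x ⬝ᵥ x).re :=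
  (Complex.pos_iff.mp (dotProduct_star_self_pos_iff.mpr hx)).1

lemma mulVec_eq_zero_of_forall_re_le {M M' : Matrix n n ℂ} {c : ℝ} (hM' : M'.PosSemidef)
    (h : ∀ x, (star x ⬝ᵥ M' *ᵥ x).re ≤ c * (star x ⬝ᵥ M *ᵥ x).re) {g : n → ℂ}
    (hg : M *ᵥ g = 0) : M' *ᵥ g = 0 := by
  refine (hM'.dotProduct_mulVec_zero_iff g).mp ?_
  have hle := h g
  rw [hg, dotProduct_zero, Complex.zero_re, mul_zero] at hle
  have hnonneg := hM'.dotProduct_mulVec_nonneg g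
  exact Complex.ext (le_antisymm hle (Complex.nonneg_iff.mp hnonneg).1)
    (Complex.nonneg_iff.mp hnonneg).2.symm

variable [DecidableEq n]

def posSpectrum (M : Matrix n n ℂ) : Set ℝ :=
  {s : ℝ | 0 < s ∧ (s : ℂ) ∈ spectrum ℂ M}

lemma exists_mulVec_eq_smul_of_mem_spectrum {M : Matrix n n ℂ} {μ : ℂ}
    (hμ : μ ∈ spectrum ℂ M) : ∃ f, f ≠ 0 ∧ M *ᵥ f = μ • f := by
  rw [← spectrum_toLin', ← Module.End.hasEigenvalue_iff_mem_spectrum] at hμ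
  obtain ⟨f, hf⟩ := hμ.exists_hasEigenvector
  exact ⟨f, hf.2, by simpa using hf.apply_eq_smul⟩

namespace IsHermitian

variable {M : Matrix n n ℂ} (hM : M.IsHermitian)
include hM

lemma ofReal_mem_spectrum_iff {s : ℝ} :
    (s : ℂ) ∈ spectrum ℂ M ↔ s ∈ Set.range hM.eigenvalues := by
  rw [← Complex.coe_algebraMap, spectrum.algebraMap_mem_iff,
    hM.spectrum_real_eq_range_eigenvalues]

lemma posSpectrum_finite : (posSpectrum M).Finite :=
  (Set.finite_range hM.eigenvalues).subset fun _ hs => hM.ofReal_mem_spectrum_iff.mp hs.2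

lemma star_eigenvectorUnitary_mulVec_apply (x : n → ℂ) (i : n) :
    (star (hM.eigenvectorUnitary : Matrix n n ℂ) *ᵥ x) i =
      star ⇑(hM.eigenvectorBasis i) ⬝ᵥ x := by
  simp [mulVec, dotProduct, star_apply]

lemma re_star_dotProduct_mulVec_eq_sum (x : n → ℂ) :
    (star x ⬝ᵥ M *ᵥ x).re =
      ∑ i, hM.eigenvalues i * Complex.normSq (star ⇑(hM.eigenvectorBasis i) ⬝ᵥ x) := by
  set U : Matrix n n ℂ := (hM.eigenvectorUnitary : Matrix n n ℂ)
  have hMU : M = (star U)ᴴ * diagonal (fun i => (hM.eigenvalues i : ℂ)) * star U := by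
    rw [star_eq_conjTranspose, conjTranspose_conjTranspose]
    exact hM.spectral_theorem
  conv_lhs => rw [hMU, ← star_mulVec_dotProduct_mulVec_mulVec, re_star_dotProduct_diagonal_mulVec]
  simp only [star_eigenvectorUnitary_mulVec_apply, U]

lemma re_star_dotProduct_self_eq_sum (x : n → ℂ) :
    (star x ⬝ᵥ x).re = ∑ i, Complex.normSq (star ⇑(hM.eigenvectorBasis i) ⬝ᵥ x) := by
  set U : Matrix n n ℂ := (hM.eigenvectorUnitary : Matrix n n ℂ)
  have hU : (1 : Matrix n n ℂ) = (star U)ᴴ * diagonal (fun _ => ((1 : ℝ) : ℂ)) * star U := by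
    rw [star_eq_conjTranspose, conjTranspose_conjTranspose, Complex.ofReal_one, diagonal_one,
      Matrix.mul_one]
    exact (mem_unitaryGroup_iff.mp hM.eigenvectorUnitary.2).symm
  rw [← congrArg (star x ⬝ᵥ ·) (one_mulVec x), hU, ← star_mulVec_dotProduct_mulVec_mulVec,
    re_star_dotProduct_diagonal_mulVec]
  simp only [star_eigenvectorUnitary_mulVec_apply, one_mul, U]

lemma re_star_dotProduct_mulVec_le_sSup_mul (x : n → ℂ) :
    (star x ⬝ᵥ M *ᵥ x).re ≤ sSup (posSpectrum M) * (star x ⬝ᵥ x).re := by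
  rw [hM.re_star_dotProduct_mulVec_eq_sum, hM.re_star_dotProduct_self_eq_sum, Finset.mul_sum]
  refine Finset.sum_le_sum fun i _ => mul_le_mul_of_nonneg_right ?_ (Complex.normSq_nonneg _)
  rcases le_or_gt (hM.eigenvalues i) 0 with h | h
  · exact h.trans (Real.sSup_nonneg fun s hs => hs.1.le)
  · exact le_csSup hM.posSpectrum_finite.bddAbove ⟨h, hM.ofReal_mem_spectrum_iff.mpr ⟨i, rfl⟩⟩

end IsHermitian

lemma PosSemidef.sInf_mul_le_re_star_dotProduct_mulVec {M : Matrix n n ℂ} (hM : M.PosSemidef)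
    {x : n → ℂ} (hx : ∀ g, M *ᵥ g = 0 → star g ⬝ᵥ x = 0) :
    sInf (posSpectrum M) * (star x ⬝ᵥ x).re ≤ (star x ⬝ᵥ M *ᵥ x).re := by
  rw [hM.1.re_star_dotProduct_mulVec_eq_sum, hM.1.re_star_dotProduct_self_eq_sum, Finset.mul_sum]
  refine Finset.sum_le_sum fun i _ => ?_
  rcases (hM.eigenvalues_nonneg i).eq_or_lt with h | h
  · have hker : M *ᵥ ⇑(hM.1.eigenvectorBasis i) = 0 := by
      rw [hM.1.mulVec_eigenvectorBasis, ← h, zero_smul]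
    simp [hx _ hker]
  · exact mul_le_mul_of_nonneg_right
      (csInf_le ⟨0, fun s hs => hs.1.le⟩ ⟨h, hM.1.ofReal_mem_spectrum_iff.mpr ⟨i, rfl⟩⟩)
      (Complex.normSq_nonneg _)

lemma PosSemidef.exists_ofReal_of_mem_spectrum {N : Matrix n n ℂ} (hN : N.PosSemidef) {μ : ℂ}
    (hμ : μ ∈ spectrum ℂ N) : ∃ r : ℝ, 0 ≤ r ∧ μ = r := by
  rw [hN.1.spectrum_eq_image_range] at hμ
  obtain ⟨_, ⟨i, rfl⟩, rfl⟩ := hμ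
  exact ⟨_, hN.eigenvalues_nonneg i, rfl⟩

section Comparison

variable {M M' : Matrix n n ℂ} {c : ℝ}

lemma le_mul_sSup_posSpectrum_of_forall_re_le (hM : M.IsHermitian) (hc : 0 ≤ c)
    (h : ∀ x, (star x ⬝ᵥ M' *ᵥ x).re ≤ c * (star x ⬝ᵥ M *ᵥ x).re) {s : ℝ}
    (hs : s ∈ posSpectrum M') : s ≤ c * sSup (posSpectrum M) := by
  obtain ⟨f, hf0, hf⟩ := exists_mulVec_eq_smul_of_mem_spectrum hs.2
  refine le_of_mul_le_mul_right ?_ (re_star_dotProduct_self_pos hf0)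
  calc s * (star f ⬝ᵥ f).re = (star f ⬝ᵥ M' *ᵥ f).re := by
        rw [hf, dotProduct_smul, smul_eq_mul, Complex.re_ofReal_mul]
    _ ≤ c * (star f ⬝ᵥ M *ᵥ f).re := h f
    _ ≤ c * (sSup (posSpectrum M) * (star f ⬝ᵥ f).re) :=
        mul_le_mul_of_nonneg_left (hM.re_star_dotProduct_mulVec_le_sSup_mul f) hc
    _ = c * sSup (posSpectrum M) * (star f ⬝ᵥ f).re := by ring

lemma sInf_posSpectrum_le_mul_of_forall_re_le (hM : M.PosSemidef) (hM' : M'.IsHermitian)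
    (hker : ∀ g, M *ᵥ g = 0 → M' *ᵥ g = 0)
    (h : ∀ x, (star x ⬝ᵥ M *ᵥ x).re ≤ c * (star x ⬝ᵥ M' *ᵥ x).re) {s : ℝ}
    (hs : s ∈ posSpectrum M') : sInf (posSpectrum M) ≤ c * s := by
  obtain ⟨f, hf0, hf⟩ := exists_mulVec_eq_smul_of_mem_spectrum hs.2
  -- an eigenvector for a nonzero eigenvalue of `M'` lies in the range of `M'`, hence is
  -- orthogonal to `ker M' ⊇ ker M`
  have hperp : ∀ g, M *ᵥ g = 0 → star g ⬝ᵥ f = 0 := by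
    intro g hg
    have : (s : ℂ) * (star g ⬝ᵥ f) = 0 := by
      rw [← smul_eq_mul, ← dotProduct_smul, ← hf, dotProduct_mulVec, ← hM'.eq, ← star_mulVec,
        hker g hg, star_zero, zero_dotProduct]
    exact (mul_eq_zero.mp this).resolve_left (Complex.ofReal_ne_zero.mpr hs.1.ne')
  refine le_of_mul_le_mul_right ?_ (re_star_dotProduct_self_pos hf0)
  calc sInf (posSpectrum M) * (star f ⬝ᵥ f).re ≤ (star f ⬝ᵥ M *ᵥ f).re :=
        hM.sInf_mul_le_re_star_dotProduct_mulVec hperp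
    _ ≤ c * (star f ⬝ᵥ M' *ᵥ f).re := h f
    _ = c * s * (star f ⬝ᵥ f).re := by
        rw [hf, dotProduct_smul, smul_eq_mul, Complex.re_ofReal_mul, mul_assoc]

theorem sSup_div_sInf_posSpectrum_le (hM : M.PosSemidef) (hM' : M'.PosSemidef) (hc : 0 < c)
    (h₁ : ∀ x, (star x ⬝ᵥ M' *ᵥ x).re ≤ c * (star x ⬝ᵥ M *ᵥ x).re)
    (h₂ : ∀ x, (star x ⬝ᵥ M *ᵥ x).re ≤ c * (star x ⬝ᵥ M' *ᵥ x).re) :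
    sSup (posSpectrum M') / sInf (posSpectrum M') ≤
      c ^ 2 * (sSup (posSpectrum M) / sInf (posSpectrum M)) :=
  sSup_div_sInf_le_sq_mul hM.1.posSpectrum_finite (fun _ hs => hs.1) hc
    (fun _ hs => le_mul_sSup_posSpectrum_of_forall_re_le hM.1 hc.le h₁ hs)
    (fun _ hs => sInf_posSpectrum_le_mul_of_forall_re_le hM hM'.1
      (fun _ hg => mulVec_eq_zero_of_forall_re_le hM' h₁ hg) h₂ hs)

end Comparison

lemma singVals_mul_eq_posSpectrum {X Y : Matrix n n ℂ} (hXY : (X * Y).IsHermitian)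
    (hYX : (Y * X).PosSemidef) : singVals (X * Y) = posSpectrum (Y * X) := by
  ext s
  simp only [singVals, posSpectrum, Set.mem_ofPred_eq, and_congr_right_iff]
  intro hs
  have hs0 : (s : ℂ) ≠ 0 := Complex.ofReal_ne_zero.mpr hs.ne'
  have hswap := spectrum.nonzero_mul_comm (𝕜 := ℂ) X Y
  rw [hXY.eq, ← sq, spectrum.map_pow_of_pos (𝕜 := ℂ) _ two_pos]
  constructor
  · rintro ⟨μ, hμ, hμs⟩
    have hμ0 : μ ≠ 0 := by
      rintro rfl
      exact hs0 (pow_eq_zero_iff two_ne_zero |>.mp (by simpa using hμs.symm))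
    have hμ' : μ ∈ spectrum ℂ (Y * X) \ {0} := hswap ▸ ⟨hμ, hμ0⟩
    obtain ⟨r, hr, rfl⟩ := hYX.exists_ofReal_of_mem_spectrum hμ'.1
    have hμs' : (r : ℂ) ^ 2 = (s : ℂ) ^ 2 := hμs
    have hrs : r = s := (pow_left_inj₀ hr hs.le two_ne_zero).mp (by exact_mod_cast hμs')
    exact hrs ▸ hμ'.1
  · intro h
    have hs' : (s : ℂ) ∈ spectrum ℂ (X * Y) \ {0} := hswap ▸ ⟨h, hs0⟩
    exact ⟨s, hs'.1, rfl⟩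

lemma conjTranspose_cfcSqrt (A : Matrix n n ℂ) : (CFC.sqrt A)ᴴ = CFC.sqrt A :=
  (CFC.sqrt_nonneg A).isSelfAdjoint

lemma PosSemidef.cfcSqrt_mul_mul_cfcSqrt {P : Matrix n n ℂ} (hP : P.PosSemidef) (K : Matrix n n ℂ) :
    (CFC.sqrt K * P * CFC.sqrt K).PosSemidef := by
  simpa only [conjTranspose_cfcSqrt] using hP.conjTranspose_mul_mul_same (CFC.sqrt K)

lemma singVals_mul_eq_posSpectrum_of_commute {K P : Matrix n n ℂ} (hK : K.PosSemidef)
    (hP : P.PosSemidef) (hcomm : P * K = K * P) :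
    singVals (P * K) = posSpectrum (CFC.sqrt K * P * CFC.sqrt K) := by
  set C := CFC.sqrt K
  have hPK : P * C * C = P * K := by rw [Matrix.mul_assoc, CFC.sqrt_mul_sqrt_self K hK.nonneg]
  rw [← hPK, Matrix.mul_assoc C]
  refine singVals_mul_eq_posSpectrum (hPK ▸ (hP.1.commute_iff hK.1).mp hcomm) ?_
  rw [← Matrix.mul_assoc]
  exact hP.cfcSqrt_mul_mul_cfcSqrt K

lemma singVals_cfcSqrt_mul_mul_cfcSqrt {K P : Matrix n n ℂ} (hK : K.PosSemidef)
    (hP : P.PosSemidef) :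
    singVals (CFC.sqrt P * K * CFC.sqrt P) = posSpectrum (CFC.sqrt K * P * CFC.sqrt K) := by
  set C := CFC.sqrt K
  set Q := CFC.sqrt P
  have hCC : C * C = K := CFC.sqrt_mul_sqrt_self K hK.nonneg
  have hQQ : Q * Q = P := CFC.sqrt_mul_sqrt_self P hP.nonneg
  have hQKQ : Q * C * (C * Q) = Q * K * Q := by
    rw [← hCC]
    simp only [Matrix.mul_assoc]
  have hCPC : C * Q * (Q * C) = C * P * C := by
    rw [← hQQ]
    simp only [Matrix.mul_assoc]
  rw [← hQKQ, ← hCPC]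
  refine singVals_mul_eq_posSpectrum ?_ (hCPC ▸ hP.cfcSqrt_mul_mul_cfcSqrt K)
  rw [hQKQ]
  simpa only [show Qᴴ = Q from conjTranspose_cfcSqrt P] using (hK.conjTranspose_mul_mul_same Q).1

lemma norm_toEuclideanCLM_cfcSqrt_sq {A : Matrix n n ℂ} (hA : A.PosSemidef) (y : n → ℂ) :
    ‖toEuclideanCLM (𝕜 := ℂ) (CFC.sqrt A) (WithLp.toLp 2 y)‖ ^ 2 = (star y ⬝ᵥ A *ᵥ y).re := by
  have hsqrt : (CFC.sqrt A)ᴴ * CFC.sqrt A = A := by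
    rw [conjTranspose_cfcSqrt, CFC.sqrt_mul_sqrt_self A hA.nonneg]
  rw [toEuclideanCLM_toLp, ← inner_self_eq_norm_sq (𝕜 := ℂ), EuclideanSpace.inner_toLp_toLp,
    RCLike.re_to_complex, dotProduct_comm, star_mulVec, ← dotProduct_mulVec, mulVec_mulVec, hsqrt]

lemma re_conj_le_of_norm_cfcSqrt_le {A B : Matrix n n ℂ} (hA : A.PosSemidef) (hB : B.PosSemidef)
    (C : Matrix n n ℂ) {c : ℝ}
    (h : ∀ f, ‖toEuclideanCLM (𝕜 := ℂ) (CFC.sqrt A) f‖ ≤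
      c * ‖toEuclideanCLM (𝕜 := ℂ) (CFC.sqrt B) f‖) (x : n → ℂ) :
    (star x ⬝ᵥ (Cᴴ * A * C) *ᵥ x).re ≤ c ^ 2 * (star x ⬝ᵥ (Cᴴ * B * C) *ᵥ x).re := by
  rw [← star_mulVec_dotProduct_mulVec_mulVec, ← star_mulVec_dotProduct_mulVec_mulVec,
    ← norm_toEuclideanCLM_cfcSqrt_sq hA, ← norm_toEuclideanCLM_cfcSqrt_sq hB, ← mul_pow]
  exact pow_le_pow_left₀ (norm_nonneg _) (h _) 2

end Matrix

open Matrix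

/-- If `(1+γ)⁻¹ ‖P^{1/2} f‖ ≤ ‖P'^{1/2} f‖ ≤ (1+γ) ‖P^{1/2} f‖` for all `f`
and `P` commutes with `K`, then `κ(P'^{1/2} K P'^{1/2}) ≤ (1+γ)⁴ κ(P K)`. -/
theorem stmt11 {n : Type*} [Fintype n] [DecidableEq n] {K P P' : Matrix n n ℂ}
    (hK : K.PosSemidef) (hP : P.PosDef) (hP' : P'.PosDef)
    (hcomm : P * K = K * P) (γ : ℝ) (hγ : 0 < γ)
    (hratio : ∀ f : EuclideanSpace ℂ n,
      (1 + γ)⁻¹ * ‖Matrix.toEuclideanCLM (𝕜 := ℂ) (CFC.sqrt P) f‖ ≤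
          ‖Matrix.toEuclideanCLM (𝕜 := ℂ) (CFC.sqrt P') f‖ ∧
        ‖Matrix.toEuclideanCLM (𝕜 := ℂ) (CFC.sqrt P') f‖ ≤
          (1 + γ) * ‖Matrix.toEuclideanCLM (𝕜 := ℂ) (CFC.sqrt P) f‖) :
    kappa (CFC.sqrt P' * K * CFC.sqrt P') ≤ (1 + γ) ^ 4 * kappa (P * K) := by
  have h₁ := re_conj_le_of_norm_cfcSqrt_le hP'.posSemidef hP.posSemidef (CFC.sqrt K)
    fun f => (hratio f).2
  have h₂ := re_conj_le_of_norm_cfcSqrt_le hP.posSemidef hP'.posSemidef (CFC.sqrt K)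
    fun f => (inv_mul_le_iff₀ (by positivity)).mp (hratio f).1
  rw [conjTranspose_cfcSqrt] at h₁ h₂
  rw [kappa, kappa, singVals_mul_eq_posSpectrum_of_commute hK hP.posSemidef hcomm,
    singVals_cfcSqrt_mul_mul_cfcSqrt hK hP'.posSemidef]
  calc _ ≤ ((1 + γ) ^ 2) ^ 2 * _ :=
        sSup_div_sInf_posSpectrum_le (hP.posSemidef.cfcSqrt_mul_mul_cfcSqrt K)
          (hP'.posSemidef.cfcSqrt_mul_mul_cfcSqrt K) (by positivity) h₁ h₂
    _ = _ := by ring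
end

section
/- Let K be a positive semidefinite Hermitian matrix with eigenvalues λ₁ ≥ λ₂ ≥ … and λ_q > 0, and let P_q = I − Σ_{i=1}^{q−1}(1 − λ_q/λ_i) ψ_i ψ_i* be the level-q spectral preconditioner. Then P_q^{1/2} = √λ_q · h_{√λ_q}(K^{1/2})⁻¹, where h_α applies the function x ↦ max(x, α) to the eigenvalues via the spectral functional calculus. -/
/-! With `U` the unitary matrix whose columns are the `ψᵢ`, every matrix involved is
`U diag(c) Uᴴ` for a real weight vector `c`. The map `c ↦ U diag(c) Uᴴ` is an `ℝ`-algebra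
homomorphism, and it carries pointwise application of `f` to `cfc f`: on a matrix the
spectrum is finite, so `cfc f` is evaluation of a Lagrange interpolating polynomial, which
commutes with algebra homomorphisms. Hence `√λ_q • h(K^{1/2})⁻¹ = U diag(w) Uᴴ` with
`wᵢ = √λ_q / max(√λᵢ, √λ_q) ≥ 0`, and monotonicity of `λ` gives `wᵢ² = λ_q / λᵢ` for `i < q`
and `wᵢ² = 1` otherwise, i.e. `(U diag(w) Uᴴ)² = P_q`. Uniqueness of positive semidefinite
square roots concludes. -/

open scoped ComplexOrder

theorem stmt14_sqrt_isHermitian {n : ℕ} {K : Matrix (Fin n) (Fin n) ℂ} (hK : K.PosSemidef) :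
    (hK.1.cfc Real.sqrt).IsHermitian := by
  rw [← Matrix.IsHermitian.cfc_eq]
  exact cfc_predicate Real.sqrt K

open Matrix Polynomial

theorem cfc_eq_aeval_interpolate {A : Type*} {p : A → Prop} [Ring A] [StarRing A]
    [TopologicalSpace A] [Algebra ℝ A] [ContinuousFunctionalCalculus ℝ A p]
    {a : A} {s : Finset ℝ} (hs : spectrum ℝ a ⊆ s) (f : ℝ → ℝ) (ha : p a := by cfc_tac) :
    cfc f a = aeval a (Lagrange.interpolate s id f) := by
  rw [← cfc_polynomial _ a]
  exact cfc_congr fun x hx =>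
    (Lagrange.eval_interpolate_at_node f (Set.injOn_id _) (hs hx)).symm

namespace Matrix

variable {ι 𝕜 : Type*} [Fintype ι] [DecidableEq ι] [RCLike 𝕜]

noncomputable def unitaryConjDiagonal (U : unitary (Matrix ι ι 𝕜)) : (ι → ℝ) →ₐ[ℝ] Matrix ι ι 𝕜 :=
  (Unitary.conjStarAlgAut ℝ _ U).toAlgEquiv.toAlgHom.comp
    ((diagonalAlgHom ℝ).comp ((Algebra.ofId ℝ 𝕜).compLeft ι))

theorem unitaryConjDiagonal_apply (U : unitary (Matrix ι ι 𝕜)) (c : ι → ℝ) :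
    unitaryConjDiagonal U c =
      (U : Matrix ι ι 𝕜) * diagonal (fun i => (c i : 𝕜)) * (U : Matrix ι ι 𝕜)ᴴ :=
  rfl

variable (U : unitary (Matrix ι ι 𝕜))

theorem unitaryConjDiagonal_eq_sum (c : ι → ℝ) :
    unitaryConjDiagonal U c =
      ∑ i, (c i : 𝕜) • vecMulVec ((U : Matrix ι ι 𝕜).col i) (star ((U : Matrix ι ι 𝕜).col i)) := by
  ext j k
  rw [unitaryConjDiagonal_apply, mul_apply, sum_apply]
  refine Finset.sum_congr rfl fun i _ => ?_
  simp only [mul_diagonal, smul_apply, vecMulVec_apply, col_apply, Pi.star_apply,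
    conjTranspose_apply]
  ring

theorem isHermitian_unitaryConjDiagonal (c : ι → ℝ) : (unitaryConjDiagonal U c).IsHermitian :=
  isHermitian_mul_mul_conjTranspose _ (isHermitian_diagonal_of_self_adjoint _ <| by
    ext i; simp)

theorem posSemidef_unitaryConjDiagonal {c : ι → ℝ} (hc : 0 ≤ c) :
    (unitaryConjDiagonal U c).PosSemidef :=
  (posSemidef_diagonal_iff.mpr fun i => by simpa using hc i).mul_mul_conjTranspose_same _

theorem cfc_unitaryConjDiagonal (f : ℝ → ℝ) (c : ι → ℝ) :
    cfc f (unitaryConjDiagonal U c) = unitaryConjDiagonal U (f ∘ c) := by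
  have hfin : (Set.range c ∪ spectrum ℝ (unitaryConjDiagonal U c)).Finite :=
    (Set.finite_range c).union finite_real_spectrum
  have hA : IsSelfAdjoint (unitaryConjDiagonal U c) := isHermitian_unitaryConjDiagonal U c
  rw [cfc_eq_aeval_interpolate (s := hfin.toFinset) (by simp) f, aeval_algHom_apply,
    aeval_pi_apply]
  congr 1
  ext i
  exact Lagrange.eval_interpolate_at_node f (Set.injOn_id _) (by simp)

theorem inv_unitaryConjDiagonal {c : ι → ℝ} (hc : ∀ i, c i ≠ 0) :
    (unitaryConjDiagonal U c)⁻¹ = unitaryConjDiagonal U c⁻¹ := by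
  refine inv_eq_right_inv ?_
  rw [← map_mul, ← map_one (unitaryConjDiagonal U)]
  congr 1
  ext i
  exact mul_inv_cancel₀ (hc i)

theorem mem_unitaryGroup_of_orthonormal {ψ : ι → ι → 𝕜}
    (hψ : ∀ i j, star (ψ i) ⬝ᵥ ψ j = if i = j then 1 else 0) : (of ψ)ᵀ ∈ unitaryGroup ι 𝕜 := by
  rw [mem_unitaryGroup_iff']
  ext i j
  simpa [mul_apply, one_apply, dotProduct] using hψ i j

end Matrix

theorem sqrt_div_max_sqrt_mul_self_of_le {a b : ℝ} (hb : 0 < b) (hba : b ≤ a) :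
    (√b / max √a √b) * (√b / max √a √b) = b / a := by
  rw [max_eq_left (Real.sqrt_le_sqrt hba), div_mul_div_comm, Real.mul_self_sqrt hb.le,
    Real.mul_self_sqrt (hb.le.trans hba)]

theorem sqrt_div_max_sqrt_of_le {a b : ℝ} (hb : 0 < b) (hab : a ≤ b) : √b / max √a √b = 1 := by
  rw [max_eq_right (Real.sqrt_le_sqrt hab), div_self (Real.sqrt_pos.mpr hb).ne']

theorem sqrt_div_max_sqrt_mul_self_of_antitone {ι : Type*} [LinearOrder ι] {lam : ι → ℝ}
    (hmono : Antitone lam) {q : ι} (hq : 0 < lam q) (i : ι) :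
    (√(lam q) / max √(lam i) √(lam q)) * (√(lam q) / max √(lam i) √(lam q)) =
      1 - if i < q then 1 - lam q / lam i else 0 := by
  split_ifs with hiq
  · rw [sqrt_div_max_sqrt_mul_self_of_le hq (hmono hiq.le), sub_sub_cancel]
  · rw [sqrt_div_max_sqrt_of_le hq (hmono (not_lt.mp hiq)), mul_one, sub_zero]

/-- With `K = ∑ λᵢ ψᵢψᵢ*` PSD, nonincreasing eigenvalues, orthonormal
eigenvectors and `λ_q > 0`, the PSD square root of the spectral preconditioner
`P_q = I − ∑_{i<q} (1 − λ_q/λᵢ) ψᵢψᵢ*` equals `√λ_q · h_{√λ_q}(K^{1/2})⁻¹`, where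
`h_α` applies `x ↦ max x α` to the eigenvalues via the spectral functional calculus. -/
theorem stmt14 {n : ℕ} {K : Matrix (Fin n) (Fin n) ℂ} (hK : K.PosSemidef)
    (lam : Fin n → ℝ) (hmono : Antitone lam)
    (ψ : Fin n → (Fin n → ℂ))
    (horth : ∀ i j, dotProduct (star (ψ i)) (ψ j) = if i = j then 1 else 0)
    (hdecomp : K = ∑ i, ((lam i : ℂ)) • Matrix.vecMulVec (ψ i) (star (ψ i)))
    (q : Fin n) (hq : 0 < lam q)
    (Pq : Matrix (Fin n) (Fin n) ℂ)
    (hPq : Pq = 1 - ∑ i ∈ Finset.Iio q,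
      (((1 - lam q / lam i : ℝ)) : ℂ) • Matrix.vecMulVec (ψ i) (star (ψ i))) :
    ∀ Q : Matrix (Fin n) (Fin n) ℂ, Q.PosSemidef → Q * Q = Pq →
      Q = Real.sqrt (lam q) •
        ((stmt14_sqrt_isHermitian hK).cfc (fun x => max x (Real.sqrt (lam q))))⁻¹ := by
  intro Q hQ hQQ
  set U : unitary (Matrix (Fin n) (Fin n) ℂ) := ⟨(of ψ)ᵀ, mem_unitaryGroup_of_orthonormal horth⟩
  have hsum (c : Fin n → ℝ) :
      ∑ i, (c i : ℂ) • vecMulVec (ψ i) (star (ψ i)) = unitaryConjDiagonal U c :=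
    (unitaryConjDiagonal_eq_sum U c).symm
  set w : Fin n → ℝ := fun i => √(lam q) / max √(lam i) √(lam q)
  have hcfc : (stmt14_sqrt_isHermitian hK).cfc (fun x => max x (Real.sqrt (lam q))) =
      unitaryConjDiagonal U (fun i => max √(lam i) √(lam q)) := by
    rw [← IsHermitian.cfc_eq, ← IsHermitian.cfc_eq, hdecomp, hsum, cfc_unitaryConjDiagonal,
      cfc_unitaryConjDiagonal]
    rfl
  have hPq' : Pq = unitaryConjDiagonal U (w * w) := by
    have hww : w * w = 1 - fun i => if i < q then 1 - lam q / lam i else 0 :=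
      funext (sqrt_div_max_sqrt_mul_self_of_antitone hmono hq)
    rw [hww, map_sub, map_one, ← hsum, hPq]
    simp only [apply_ite Complex.ofReal, Complex.ofReal_zero, ite_smul, zero_smul]
    rw [← Finset.sum_filter, Finset.filter_gt_eq_Iio]
  have hinv : Real.sqrt (lam q) • (unitaryConjDiagonal U (fun i => max √(lam i) √(lam q)))⁻¹ =
      unitaryConjDiagonal U w := by
    have hpos (i : Fin n) : 0 < max √(lam i) √(lam q) :=
      lt_max_of_lt_right (Real.sqrt_pos.mpr hq)
    rw [inv_unitaryConjDiagonal U fun i => (hpos i).ne', ← map_smul]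
    rfl
  have hwpsd := posSemidef_unitaryConjDiagonal U (c := w) fun i => by positivity
  open scoped MatrixOrder in
  rw [hcfc, hinv, ← CFC.sq_eq_sq_iff Q _ hQ.nonneg hwpsd.nonneg, sq, sq, hQQ, ← map_mul, hPq']
end

section
/- Let K be a positive semidefinite Hermitian matrix with eigenvalues λ₁ ≥ … and eigenvectors ψ_i, let q satisfy λ_q > 0, and let P_q be the level-q spectral preconditioner P_q = I − Σ_{i=1}^{q−1}(1 − λ_q/λ_i) ψ_i ψ_i*. Then the nonzero eigenvalues of P_q K are exactly: λ_q with multiplicity at least q (for the subspace spanned by ψ₁,…,ψ_q), and λ_i for i > q; in particular κ(P_q K) = λ_q / λ_r, where λ_r is the smallest nonzero eigenvalue of K. -/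
open scoped ComplexOrder

/-!
Since `λ_i ≥ λ_q` for `i < q`, the preconditioner `P_q` scales `ψ_i` by `λ_q / λ_i` for `i < q`
and fixes it otherwise, so `P_q K ψ_i = min(λ_i, λ_q) ψ_i` for every `i`. In the orthonormal
basis `ψ`, `P_q K` is therefore the real diagonal matrix `diag(min(λ_i, λ_q))`; its singular
values are the positive entries, the largest being `λ_q` and the smallest `λ_r`.
-/

open Matrix

section Orthonormal

variable {𝕜 m ι : Type*} [RCLike 𝕜] [Fintype m] [DecidableEq ι] {ψ : ι → m → 𝕜}

theorem sum_smul_vecMulVec_star_mulVec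
    (horth : ∀ i j, star (ψ i) ⬝ᵥ ψ j = if i = j then 1 else 0)
    (s : Finset ι) (c : ι → 𝕜) (j : ι) :
    (∑ i ∈ s, c i • vecMulVec (ψ i) (star (ψ i))) *ᵥ ψ j = (if j ∈ s then c j else 0) • ψ j := by
  simp only [sum_mulVec, smul_mulVec, vecMulVec_mulVec, horth, op_smul_eq_smul, ite_smul,
    one_smul, zero_smul, smul_ite, smul_zero, Finset.sum_ite_eq']

end Orthonormal

section Unitary

variable {𝕜 m : Type*} [RCLike 𝕜] [Fintype m] [DecidableEq m] {ψ : m → m → 𝕜}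

theorem of_transpose_mem_unitaryGroup
    (horth : ∀ i j, star (ψ i) ⬝ᵥ ψ j = if i = j then 1 else 0) :
    (of ψ)ᵀ ∈ unitaryGroup m 𝕜 := by
  rw [mem_unitaryGroup_iff']
  ext i j
  simpa [mul_apply, one_apply, dotProduct] using horth i j

theorem eq_mul_diagonal_mul_conjTranspose_of_mulVec
    (horth : ∀ i j, star (ψ i) ⬝ᵥ ψ j = if i = j then 1 else 0)
    {M : Matrix m m 𝕜} {d : m → 𝕜} (hM : ∀ j, M *ᵥ ψ j = d j • ψ j) :
    M = (of ψ)ᵀ * diagonal d * (of ψ)ᵀᴴ := by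
  have hcols : M * (of ψ)ᵀ = (of ψ)ᵀ * diagonal d := by
    ext i j
    rw [mul_diagonal]
    simpa [mul_apply, mulVec, dotProduct, mul_comm] using congrFun (hM j) i
  rw [← hcols, mul_assoc, ← star_eq_conjTranspose,
    mem_unitaryGroup_iff.mp (of_transpose_mem_unitaryGroup horth), mul_one]

end Unitary

theorem singVals_eq_image_of_mulVec {m : Type*} [Fintype m] [DecidableEq m]
    {ψ : m → m → ℂ} (horth : ∀ i j, star (ψ i) ⬝ᵥ ψ j = if i = j then 1 else 0)
    {M : Matrix m m ℂ} {s : m → ℝ} (hs : ∀ j, 0 ≤ s j) (hM : ∀ j, M *ᵥ ψ j = (s j : ℂ) • ψ j) :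
    singVals M = s '' {j | 0 < s j} := by
  have hU := of_transpose_mem_unitaryGroup horth
  have hMM : Mᴴ * M = (of ψ)ᵀ * diagonal (fun j => (s j : ℂ) ^ 2) * (of ψ)ᵀᴴ := by
    have hUU : (of ψ)ᵀᴴ * (of ψ)ᵀ = 1 := mem_unitaryGroup_iff'.mp hU
    rw [eq_mul_diagonal_mul_conjTranspose_of_mulVec horth hM]
    have hstar : (star fun j => (s j : ℂ)) = fun j => (s j : ℂ) :=
      funext fun j => Complex.conj_ofReal (s j)
    simp only [conjTranspose_mul, conjTranspose_conjTranspose, diagonal_conjTranspose, hstar]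
    calc _ = (of ψ)ᵀ * (diagonal (fun j => (s j : ℂ)) * ((of ψ)ᵀᴴ * (of ψ)ᵀ) *
          diagonal fun j => (s j : ℂ)) * (of ψ)ᵀᴴ := by simp only [mul_assoc]
      _ = _ := by rw [hUU, mul_one, diagonal_mul_diagonal]; simp only [sq]
  have hspec : spectrum ℂ (Mᴴ * M) = Set.range fun j => (s j : ℂ) ^ 2 := by
    rw [hMM, ← spectrum_diagonal]
    exact Unitary.spectrum_star_right_conjugate (U := ⟨_, hU⟩)
  ext t
  simp only [singVals, hspec, Set.mem_ofPred_eq, Set.mem_range, Set.mem_image]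
  constructor
  · rintro ⟨ht, j, hj⟩
    have hjt : s j = t := (sq_eq_sq₀ (hs j) ht.le).mp (by exact_mod_cast hj)
    exact ⟨j, hjt ▸ ht, hjt⟩
  · rintro ⟨j, hj, rfl⟩
    exact ⟨hj, j, rfl⟩

section SpectralPreconditioner

variable {ι : Type*} {lam : ι → ℝ} {q r : ι}

theorem isGreatest_image_min (hq : 0 < lam q) :
    IsGreatest ((fun j => min (lam j) (lam q)) '' {j | 0 < min (lam j) (lam q)}) (lam q) :=
  ⟨⟨q, by simpa using hq, min_self _⟩, by rintro _ ⟨j, -, rfl⟩; exact min_le_right _ _⟩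

theorem isLeast_image_min [LinearOrder ι] (hmono : Antitone lam) (hq : 0 < lam q) (hr : 0 < lam r)
    (hrlast : ∀ i, r < i → lam i = 0) :
    IsLeast ((fun j => min (lam j) (lam q)) '' {j | 0 < min (lam j) (lam q)}) (lam r) := by
  have hle : ∀ j, 0 < lam j → lam r ≤ lam j := fun j hj =>
    hmono (not_lt.mp fun hrj => hj.ne' (hrlast j hrj))
  refine ⟨⟨r, lt_min hr hq, min_eq_left (hle q hq)⟩, ?_⟩
  rintro _ ⟨j, hj, rfl⟩
  exact le_min (hle j (hj.trans_le (min_le_left _ _))) (hle q hq)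

theorem preconditioner_mul_mulVec {n : ℕ} {K Pq : Matrix (Fin n) (Fin n) ℂ}
    {lam : Fin n → ℝ} (hmono : Antitone lam) {ψ : Fin n → Fin n → ℂ}
    (horth : ∀ i j, star (ψ i) ⬝ᵥ ψ j = if i = j then 1 else 0)
    (hdecomp : K = ∑ i, (lam i : ℂ) • vecMulVec (ψ i) (star (ψ i)))
    {q : Fin n} (hq : 0 < lam q)
    (hPq : Pq = 1 - ∑ i ∈ Finset.Iio q,
      ((1 - lam q / lam i : ℝ) : ℂ) • vecMulVec (ψ i) (star (ψ i))) (j : Fin n) :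
    (Pq * K) *ᵥ ψ j = ((min (lam j) (lam q) : ℝ) : ℂ) • ψ j := by
  have hK : K *ᵥ ψ j = (lam j : ℂ) • ψ j := by
    simpa [hdecomp] using sum_smul_vecMulVec_star_mulVec horth Finset.univ (fun i => (lam i : ℂ)) j
  have hP : Pq *ᵥ ψ j = ((1 - if j < q then 1 - lam q / lam j else 0 : ℝ) : ℂ) • ψ j := by
    rw [hPq, sub_mulVec, one_mulVec, sum_smul_vecMulVec_star_mulVec horth]
    simp only [Finset.mem_Iio]
    split_ifs <;> simp [sub_smul]
  have hscalar : lam j * (1 - if j < q then 1 - lam q / lam j else 0) = min (lam j) (lam q) := by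
    split_ifs with hj
    · have hqj := hmono hj.le
      have hj0 : lam j ≠ 0 := (hq.trans_le hqj).ne'
      rw [min_eq_right hqj]
      field_simp
      ring
    · rw [min_eq_left (hmono (not_lt.mp hj))]
      ring
  rw [← mulVec_mulVec, hK, mulVec_smul, hP, smul_smul, ← Complex.ofReal_mul, hscalar]

end SpectralPreconditioner

theorem stmt15_general {n : ℕ} {K : Matrix (Fin n) (Fin n) ℂ}
    (lam : Fin n → ℝ) (hmono : Antitone lam)
    (ψ : Fin n → (Fin n → ℂ))
    (horth : ∀ i j, dotProduct (star (ψ i)) (ψ j) = if i = j then 1 else 0)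
    (hdecomp : K = ∑ i, ((lam i : ℂ)) • Matrix.vecMulVec (ψ i) (star (ψ i)))
    (q : Fin n) (hq : 0 < lam q)
    (r : Fin n) (hr : 0 < lam r) (hrlast : ∀ i, r < i → lam i = 0)
    (Pq : Matrix (Fin n) (Fin n) ℂ)
    (hPq : Pq = 1 - ∑ i ∈ Finset.Iio q,
      (((1 - lam q / lam i : ℝ)) : ℂ) • Matrix.vecMulVec (ψ i) (star (ψ i))) :
    (∀ i, i ≤ q → (Pq * K).mulVec (ψ i) = ((lam q : ℂ)) • ψ i) ∧
    (∀ i, q < i → (Pq * K).mulVec (ψ i) = ((lam i : ℂ)) • ψ i) ∧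
    kappa (Pq * K) = lam q / lam r := by
  have hPK := preconditioner_mul_mulVec hmono horth hdecomp hq hPq
  have hlam_nonneg : ∀ j, 0 ≤ lam j := fun j =>
    (le_or_gt j r).elim (fun h => hr.le.trans (hmono h)) (fun h => (hrlast j h).ge)
  refine ⟨fun i hi => by rw [hPK, min_eq_right (hmono hi)],
    fun i hi => by rw [hPK, min_eq_left (hmono hi.le)], ?_⟩
  rw [kappa, singVals_eq_image_of_mulVec horth (fun j => le_min (hlam_nonneg j) hq.le) hPK,
    (isGreatest_image_min hq).csSup_eq, (isLeast_image_min hmono hq hr hrlast).csInf_eq]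

/-- With `K = ∑ λᵢ ψᵢψᵢ*` PSD (nonincreasing eigenvalues, orthonormal
eigenvectors), `λ_q > 0`, and `P_q` the level-`q` spectral preconditioner, the
eigenstructure of `P_q K` is: `P_q K ψᵢ = λ_q ψᵢ` for `i ≤ q` and `P_q K ψᵢ = λᵢ ψᵢ` for
`i > q`; in particular `κ(P_q K) = λ_q / λ_r` where `λ_r` is the smallest nonzero
eigenvalue of `K`. -/
theorem stmt15 {n : ℕ} {K : Matrix (Fin n) (Fin n) ℂ} (hK : K.PosSemidef)
    (lam : Fin n → ℝ) (hmono : Antitone lam)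
    (ψ : Fin n → (Fin n → ℂ))
    (horth : ∀ i j, dotProduct (star (ψ i)) (ψ j) = if i = j then 1 else 0)
    (hdecomp : K = ∑ i, ((lam i : ℂ)) • Matrix.vecMulVec (ψ i) (star (ψ i)))
    (q : Fin n) (hq : 0 < lam q)
    (r : Fin n) (hr : 0 < lam r) (hrlast : ∀ i, r < i → lam i = 0)
    (Pq : Matrix (Fin n) (Fin n) ℂ)
    (hPq : Pq = 1 - ∑ i ∈ Finset.Iio q,
      (((1 - lam q / lam i : ℝ)) : ℂ) • Matrix.vecMulVec (ψ i) (star (ψ i))) :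
    (∀ i, i ≤ q → (Pq * K).mulVec (ψ i) = ((lam q : ℂ)) • ψ i) ∧
    (∀ i, q < i → (Pq * K).mulVec (ψ i) = ((lam i : ℂ)) • ψ i) ∧
    kappa (Pq * K) = lam q / lam r :=
  stmt15_general lam hmono ψ horth hdecomp q hq r hr hrlast Pq hPq
end
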